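/- Let G be a subgraph of the complete bipartite graph K_{7,30} with parts X (of size 7) and Y (of size 30) such that G contains no copy of K_{2,2}. If the maximum degree over the vertices of X equals 7, then the bipartite complement of G contains a copy of K_{5,5}. -/
import Mathlib


/-- A subgraph of the complete bipartite graph `K_{m,n}` is identified with its
edge set, a finset of pairs `(x, y)` with `x` in the part `X = Fin m` and
`y` in the part `Y = Fin n`.  `bContains s t E` says that the bipartite graph
with edge set `E` contains a copy of `K_{s,t}`: there are `s` distinct
vertices of `X` and `t` distinct vertices of `Y` with all pairs present. -/
def bContains {m n : ℕ} (s t : ℕ) (E : Finset (Fin m × Fin n)) : Prop :=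
  ∃ (A : Finset (Fin m)) (B : Finset (Fin n)),
    A.card = s ∧ B.card = t ∧ ∀ x ∈ A, ∀ y ∈ B, (x, y) ∈ E

/-- The bipartite complement: edge set `(X × Y) \ E`. -/
def bCompl {m n : ℕ} (E : Finset (Fin m × Fin n)) : Finset (Fin m × Fin n) :=
  Finset.univ \ E

/-- The neighborhood `N_G(x) ⊆ Y` of a vertex `x ∈ X`. -/
def bNbhd {m n : ℕ} (E : Finset (Fin m × Fin n)) (x : Fin m) : Finset (Fin n) :=
  Finset.univ.filter (fun y => (x, y) ∈ E)

/-- The degree of a vertex `x ∈ X`. -/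
def bDeg {m n : ℕ} (E : Finset (Fin m × Fin n)) (x : Fin m) : ℕ :=
  (bNbhd E x).card

/-- `Δ(G_X)`: the maximum degree over the vertices of the part `X`. -/
def bMaxDegX {m n : ℕ} (E : Finset (Fin m × Fin n)) : ℕ :=
  Finset.univ.sup (fun x => bDeg E x)

/-- The neighborhood of a vertex `y ∈ Y`. -/
def bNbhdY {m n : ℕ} (E : Finset (Fin m × Fin n)) (y : Fin n) : Finset (Fin m) :=
  Finset.univ.filter (fun x => (x, y) ∈ E)

lemma sum_bDeg_eq {m n : ℕ} (E : Finset (Fin m × Fin n)) :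
    ∑ x : Fin m, bDeg E x = E.card := by
  classical
  rw [Finset.card_eq_sum_card_fiberwise (f := fun p : Fin m × Fin n => p.1)
    (fun p _ => Finset.mem_univ p.1)]
  refine Finset.sum_congr rfl ?_
  intro x _
  unfold bDeg bNbhd
  apply Finset.card_bij (fun y _ => (x, y))
  · intro y hy
    have hy' : (x, y) ∈ E := (Finset.mem_filter.mp hy).2
    exact Finset.mem_filter.mpr ⟨hy', rfl⟩
  · intro a ha b hb h
    simpa using congrArg Prod.snd h
  · intro p hp
    have hp' := Finset.mem_filter.mp hp
    refine ⟨p.2, Finset.mem_filter.mpr ⟨Finset.mem_univ _, ?_⟩, ?_⟩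
    · rw [← hp'.2]; exact hp'.1
    · rw [← hp'.2]
  
lemma sum_bNbhdY_eq {m n : ℕ} (E : Finset (Fin m × Fin n)) :
    ∑ y : Fin n, (bNbhdY E y).card = E.card := by
  classical
  rw [Finset.card_eq_sum_card_fiberwise (f := fun p : Fin m × Fin n => p.2)
    (fun p _ => Finset.mem_univ p.2)]
  refine Finset.sum_congr rfl ?_
  intro y _
  unfold bNbhdY
  apply Finset.card_bij (fun x _ => (x, y))
  · intro x hx
    have hx' : (x, y) ∈ E := (Finset.mem_filter.mp hx).2
    exact Finset.mem_filter.mpr ⟨hx', rfl⟩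
  · intro a ha b hb h
    simpa using congrArg Prod.fst h
  · intro p hp
    have hp' := Finset.mem_filter.mp hp
    refine ⟨p.1, Finset.mem_filter.mpr ⟨Finset.mem_univ _, ?_⟩, ?_⟩
    · rw [← hp'.2]; exact hp'.1
    · rw [← hp'.2]

theorem stmt_13 (E : Finset (Fin 7 × Fin 30))
    (hK : ¬ bContains 2 2 E) (hΔ : bMaxDegX E = 7) :
    bContains 5 5 (bCompl E) := by
  classical
  -- every degree is at most 7
  have hdeg : ∀ x : Fin 7, bDeg E x ≤ 7 := by
    intro x
    calc bDeg E x ≤ bMaxDegX E := Finset.le_sup (Finset.mem_univ x)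
      _ = 7 := hΔ
  have hEcard : E.card ≤ 49 := by
    rw [← sum_bDeg_eq E]
    calc ∑ x : Fin 7, bDeg E x ≤ ∑ _x : Fin 7, 7 :=
          Finset.sum_le_sum (fun x _ => hdeg x)
      _ = 49 := by simp
  have hsumY : ∑ y : Fin 30, (bNbhdY E y).card ≤ 49 := by
    rw [sum_bNbhdY_eq]; exact hEcard
  -- pairs of X-vertices
  have hPairsCard : ((Finset.univ : Finset (Fin 7)).powersetCard 2).card = 21 := by
    rw [Finset.card_powersetCard]
    simp [Nat.choose]
  -- pointwise bound: 11 ≤ w y + 5 * deg y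
  have hpoint : ∀ y : Fin 30, 11 ≤
      (((Finset.univ : Finset (Fin 7)).powersetCard 2).filter
        (fun P => bNbhdY E y ⊆ P)).card + 5 * (bNbhdY E y).card := by
    intro y
    rcases Nat.lt_or_ge (bNbhdY E y).card 3 with hk | hk
    · have hc : (bNbhdY E y).card = 0 ∨ (bNbhdY E y).card = 1 ∨ (bNbhdY E y).card = 2 := by
        omega
      rcases hc with hc | hc | hc
      · -- degree 0
        have hN : bNbhdY E y = ∅ := Finset.card_eq_zero.mp hc
        have hfil : (((Finset.univ : Finset (Fin 7)).powersetCard 2).filter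
            (fun P => bNbhdY E y ⊆ P)) = (Finset.univ : Finset (Fin 7)).powersetCard 2 := by
          rw [hN]
          exact Finset.filter_true_of_mem (fun P _ => Finset.empty_subset P)
        rw [hfil, hPairsCard]
        omega
      · -- degree 1
        obtain ⟨x, hx⟩ := Finset.card_eq_one.mp hc
        have h6 : 6 ≤ (((Finset.univ : Finset (Fin 7)).powersetCard 2).filter
            (fun P => bNbhdY E y ⊆ P)).card := by
          have hle := Finset.card_le_card_of_injOn
            (f := fun z => ({x, z} : Finset (Fin 7)))
            (s := Finset.univ.erase x)
            (t := ((Finset.univ : Finset (Fin 7)).powersetCard 2).filter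
              (fun P => bNbhdY E y ⊆ P))
            (by
              intro z hz
              have hzx : z ≠ x := Finset.ne_of_mem_erase hz
              refine Finset.mem_filter.mpr ⟨?_, ?_⟩
              · rw [Finset.mem_powersetCard_univ]
                exact Finset.card_pair (Ne.symm hzx)
              · rw [hx]
                intro a ha
                rw [Finset.mem_singleton] at ha
                rw [ha]
                exact Finset.mem_insert_self x _)
            (by
              intro a ha b hb hab
              have hax : a ≠ x := Finset.ne_of_mem_erase (Finset.mem_coe.mp ha)
              have hbx : b ≠ x := Finset.ne_of_mem_erase (Finset.mem_coe.mp hb)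
              have hab' : ({x, a} : Finset (Fin 7)) = {x, b} := hab
              have : a ∈ ({x, b} : Finset (Fin 7)) := by
                rw [← hab']
                exact Finset.mem_insert_of_mem (Finset.mem_singleton_self a)
              rcases Finset.mem_insert.mp this with h | h
              · exact absurd h hax
              · exact Finset.mem_singleton.mp h)
          have hcard : (Finset.univ.erase x).card = 6 := by
            rw [Finset.card_erase_of_mem (Finset.mem_univ x)]
            rfl
          rw [hcard] at hle
          exact hle
        omega
      · -- degree 2
        have h1 : 1 ≤ (((Finset.univ : Finset (Fin 7)).powersetCard 2).filter
            (fun P => bNbhdY E y ⊆ P)).card := by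
          apply Finset.card_pos.mpr
          refine ⟨bNbhdY E y, Finset.mem_filter.mpr ⟨?_, Finset.Subset.refl _⟩⟩
          rw [Finset.mem_powersetCard_univ]
          exact hc
        omega
    · omega
  -- summing
  have hsumw : 85 ≤ ∑ y : Fin 30,
      (((Finset.univ : Finset (Fin 7)).powersetCard 2).filter
        (fun P => bNbhdY E y ⊆ P)).card := by
    have h1 : (330 : ℕ) ≤ ∑ y : Fin 30,
        ((((Finset.univ : Finset (Fin 7)).powersetCard 2).filter
          (fun P => bNbhdY E y ⊆ P)).card + 5 * (bNbhdY E y).card) := by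
      calc (330 : ℕ) = ∑ _y : Fin 30, 11 := by simp
        _ ≤ _ := Finset.sum_le_sum (fun y _ => hpoint y)
    rw [Finset.sum_add_distrib, ← Finset.mul_sum] at h1
    omega
  -- swap sums
  have hswap : ∑ y : Fin 30,
      (((Finset.univ : Finset (Fin 7)).powersetCard 2).filter
        (fun P => bNbhdY E y ⊆ P)).card
      = ∑ P ∈ (Finset.univ : Finset (Fin 7)).powersetCard 2,
          ((Finset.univ : Finset (Fin 30)).filter (fun y => bNbhdY E y ⊆ P)).card := by
    simp only [Finset.card_filter]
    exact Finset.sum_comm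
  -- there is a good pair
  have hgood : ∃ P ∈ (Finset.univ : Finset (Fin 7)).powersetCard 2,
      5 ≤ ((Finset.univ : Finset (Fin 30)).filter (fun y => bNbhdY E y ⊆ P)).card := by
    by_contra hcon
    push_neg at hcon
    have hle : ∑ P ∈ (Finset.univ : Finset (Fin 7)).powersetCard 2,
        ((Finset.univ : Finset (Fin 30)).filter (fun y => bNbhdY E y ⊆ P)).card ≤ 84 := by
      calc _ ≤ ∑ _P ∈ (Finset.univ : Finset (Fin 7)).powersetCard 2, 4 :=
            Finset.sum_le_sum (fun P hP => by have := hcon P hP; omega)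
        _ = 84 := by rw [Finset.sum_const, hPairsCard]; rfl
    rw [hswap] at hsumw
    omega
  obtain ⟨P, hP, hP5⟩ := hgood
  have hPcard : P.card = 2 := Finset.mem_powersetCard_univ.mp hP
  obtain ⟨B, hBsub, hBcard⟩ := Finset.exists_subset_card_eq hP5
  refine ⟨Pᶜ, B, ?_, hBcard, ?_⟩
  · rw [Finset.card_compl, hPcard]
    rfl
  · intro x hx y hy
    have hxP : x ∉ P := Finset.mem_compl.mp hx
    have hyN : bNbhdY E y ⊆ P := (Finset.mem_filter.mp (hBsub hy)).2
    refine Finset.mem_sdiff.mpr ⟨Finset.mem_univ _, ?_⟩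
    intro hmem
    exact hxP (hyN (Finset.mem_filter.mpr ⟨Finset.mem_univ _, hmem⟩))
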